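/- arXiv:2301.00208 — 3 statements merged into one kernel-verified Lean document; each statement's English description precedes it below -/
import Mathlib

section
/- Let B be a unital complex Banach algebra, A a unital C*-algebra with a faithful tracial state τ, and T : B → A a surjective unital linear mapping which preserves invertible elements. Then τ(T(a b) − T(a) T(b)) = 0 for all a, b ∈ B; equivalently, τ(T(a b)) = τ(T(a) T(b)). -/
/-!
Put `F w = τ ((T (exp (w • a)))⁻¹ʳ * T (exp (w • a) * b))`. Since `T` preserves invertibility,
the spectrum of `(T u)⁻¹ʳ * T (u * w)` lies in that of `w` for every unit `u`. A tracial state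
is bounded by the spectral radius: if `r(y) < 1`, then `P = ∑ (y⋆)ⁿ yⁿ` satisfies `y⋆ P y ≤ P`,
so conjugating by `P ^ (1/2)` turns `y` into a contraction, and `τ` is invariant under
conjugation. Hence `F` is bounded; it is entire once `T` is known to be continuous, so it is
constant by Liouville, and its derivative at `0` is `τ (T (a * b) - T a * T b)`.

Continuity of `T` comes from the closed graph theorem. If `xₙ → x` and `T xₙ → y`, then
`d = y - T x` satisfies `τ ((T v)⁻¹ʳ * d) = 0` for every unit `v`, because `τ ((T v)⁻¹ʳ * T ·)`
is bounded. Taking `v = 1 + t • c` with `T c = z` and differentiating at `t = 0` gives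
`τ (z * d) = 0` for all `z`, so `d = 0` by faithfulness.
-/

open scoped ComplexOrder NNReal ENNReal Pointwise Ring
open Filter Topology NormedSpace

lemma spectrum.spectralRadius_smul {A : Type*} [NormedRing A] [NormedAlgebra ℂ A] {k : ℂ}
    (hk : k ≠ 0) (a : A) : spectralRadius ℂ (k • a) = ‖k‖₊ * spectralRadius ℂ a := by
  have : spectrum ℂ (k • a) = k • spectrum ℂ a :=
    spectrum.unit_smul_eq_smul a (Units.mk0 k hk)
  simp only [spectralRadius, this, ← Set.image_smul, iSup_image, smul_eq_mul, nnnorm_mul,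
    ENNReal.coe_mul, ENNReal.mul_iSup]

section CStarAlgebra

variable {A : Type*} [CStarAlgebra A]

lemma summable_star_pow_mul_pow {y : A} (hy : spectralRadius ℂ y < 1) :
    Summable fun n : ℕ => star (y ^ n) * y ^ n := by
  obtain ⟨ρ, hρ0, hyρ, hρ1⟩ := ENNReal.lt_iff_exists_real_btwn.mp hy
  rw [ENNReal.ofReal_lt_one] at hρ1
  have hpow : ∀ᶠ n : ℕ in atTop, ‖y ^ n‖ ≤ ρ ^ n := by
    filter_upwards [(spectrum.pow_norm_pow_one_div_tendsto_nhds_spectralRadius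
      y).eventually_lt_const hyρ, eventually_ge_atTop 1] with n hn hn1
    rw [ENNReal.ofReal_lt_ofReal_iff', one_div] at hn
    rw [← Real.rpow_inv_natCast_pow (norm_nonneg _) (by positivity : n ≠ 0)]
    gcongr
    exact hn.1.le
  refine .of_norm_bounded_eventually_nat (summable_geometric_of_lt_one (by positivity)
    (by nlinarith : ρ ^ 2 < 1)) ?_
  filter_upwards [hpow] with n hn
  rw [CStarRing.norm_star_mul_self, ← sq, ← pow_mul, mul_comm, pow_mul]
  gcongr

variable [PartialOrder A] [StarOrderedRing A]

lemma exists_isStrictlyPositive_star_mul_mul_le {y : A} (hy : spectralRadius ℂ y < 1) :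
    ∃ P : A, IsStrictlyPositive P ∧ star y * P * y ≤ P := by
  have hsum := summable_star_pow_mul_pow hy
  set P := ∑' n : ℕ, star (y ^ n) * y ^ n
  have hP : P = 1 + star y * P * y := by
    rw [← hsum.tsum_mul_left, ← (hsum.mul_left _).tsum_mul_right,
      show P = _ from hsum.tsum_eq_zero_add]
    simp only [pow_zero, star_one, one_mul, pow_succ, star_mul, mul_assoc]
  have hconj : 0 ≤ star y * P * y :=
    star_left_conjugate_nonneg (tsum_nonneg fun n => star_mul_self_nonneg (y ^ n)) y
  refine ⟨P, ?_, ?_⟩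
  · rw [hP]; exact isStrictlyPositive_one.add_nonneg hconj
  · conv_rhs => rw [hP]
    exact le_add_of_nonneg_left zero_le_one

open CFC in
lemma norm_rpow_mul_mul_rpow_neg_le_one {P y : A} (hP : IsStrictlyPositive P)
    (h : star y * P * y ≤ P) : ‖P ^ (1 / 2 : ℝ) * y * P ^ (-(1 / 2) : ℝ)‖ ≤ 1 := by
  set s := P ^ (1 / 2 : ℝ)
  set r := P ^ (-(1 / 2) : ℝ)
  have hs : IsSelfAdjoint s := .of_nonneg rpow_nonneg
  have hr : IsSelfAdjoint r := .of_nonneg rpow_nonneg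
  have hss : s * s = P := by rw [show s = sqrt P from sqrt_eq_rpow.symm, sqrt_mul_sqrt_self P]
  have hstar : star (s * y * r) * (s * y * r) = r * (star y * P * y) * r := by
    rw [star_mul, star_mul, hs.star_eq, hr.star_eq, ← hss]
    simp only [mul_assoc]
  have hle : star (s * y * r) * (s * y * r) ≤ 1 := by
    rw [hstar, ← conjugate_rpow_neg_one_half P]
    exact hr.conjugate_le_conjugate h
  rw [← sq_le_one_iff₀ (norm_nonneg _), sq, ← CStarRing.norm_star_mul_self,
    CStarAlgebra.norm_le_one_iff_of_nonneg _ (star_mul_self_nonneg _)]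
  exact hle

end CStarAlgebra

namespace PositiveLinearMap

variable {A : Type*} [CStarAlgebra A] [PartialOrder A] [StarOrderedRing A] (τ : A →ₚ[ℂ] ℂ)

lemma norm_apply_le_norm_apply_one_mul (a : A) : ‖τ a‖ ≤ ‖τ 1‖ * ‖a‖ := by
  have h1 : ‖τ.toPreGNS 1‖ = √‖τ 1‖ := by
    rw [preGNS_norm_def, ofPreGNS_toPreGNS, star_one, one_mul,
      Complex.re_eq_norm.mpr (τ.map_nonneg zero_le_one)]
  have ha : ‖τ.toPreGNS a‖ ≤ √‖τ 1‖ * ‖a‖ := by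
    rw [preGNS_norm_def, ofPreGNS_toPreGNS, ← Real.sqrt_sq (norm_nonneg a),
      ← Real.sqrt_mul (norm_nonneg _)]
    gcongr
    calc (τ (star a * a)).re ≤ ‖τ (star a * a)‖ := Complex.re_le_norm _
      _ ≤ ‖τ 1‖ * ‖star a * a‖ := norm_apply_le_of_nonneg τ _ (star_mul_self_nonneg a)
      _ = ‖τ 1‖ * ‖a‖ ^ 2 := by rw [CStarRing.norm_star_mul_self, sq]
  calc ‖τ a‖ = ‖inner ℂ (τ.toPreGNS 1) (τ.toPreGNS a)‖ := by
        rw [preGNS_inner_def, ofPreGNS_toPreGNS, ofPreGNS_toPreGNS, star_one, one_mul]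
    _ ≤ ‖τ.toPreGNS 1‖ * ‖τ.toPreGNS a‖ := norm_inner_le_norm _ _
    _ ≤ √‖τ 1‖ * (√‖τ 1‖ * ‖a‖) := by rw [h1]; gcongr
    _ = ‖τ 1‖ * ‖a‖ := by rw [← mul_assoc, Real.mul_self_sqrt (norm_nonneg _)]

lemma norm_apply_le_one_of_spectralRadius_lt_one (hτ1 : τ 1 = 1)
    (hτ : ∀ a b, τ (a * b) = τ (b * a)) {y : A} (hy : spectralRadius ℂ y < 1) :
    ‖τ y‖ ≤ 1 := by
  obtain ⟨P, hP, hPy⟩ := exists_isStrictlyPositive_star_mul_mul_le hy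
  have hconj : τ (P ^ (1 / 2 : ℝ) * y * P ^ (-(1 / 2) : ℝ)) = τ y := by
    rw [hτ, ← mul_assoc, CFC.rpow_neg_mul_rpow _ hP, one_mul]
  calc ‖τ y‖ ≤ ‖τ 1‖ * ‖P ^ (1 / 2 : ℝ) * y * P ^ (-(1 / 2) : ℝ)‖ := by
        rw [← hconj]; exact τ.norm_apply_le_norm_apply_one_mul _
    _ ≤ 1 := by rw [hτ1, norm_one, one_mul]; exact norm_rpow_mul_mul_rpow_neg_le_one hP hPy

lemma nnnorm_apply_le_spectralRadius (hτ1 : τ 1 = 1) (hτ : ∀ a b, τ (a * b) = τ (b * a))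
    (y : A) : (‖τ y‖₊ : ℝ≥0∞) ≤ spectralRadius ℂ y := by
  refine le_of_forall_gt_imp_ge_of_dense fun c hc => ?_
  induction c using ENNReal.recTopCoe with
  | top => exact le_top
  | coe C =>
    have hC : C ≠ 0 := by rintro rfl; exact ENNReal.not_lt_zero hc
    have hk : ((C : ℂ))⁻¹ ≠ 0 := by simpa using hC
    have hnorm : ‖((C : ℂ))⁻¹‖₊ = C⁻¹ := by simp
    have hscaled := τ.norm_apply_le_one_of_spectralRadius_lt_one hτ1 hτ (y := (C : ℂ)⁻¹ • y) (by
      rw [spectrum.spectralRadius_smul hk, hnorm, ENNReal.coe_inv hC,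
        ← ENNReal.inv_mul_cancel (ENNReal.coe_ne_zero.mpr hC) ENNReal.coe_ne_top]
      exact ENNReal.mul_lt_mul_right (by simp) (by simp [hC]) hc)
    rw [map_smul, norm_smul, ← coe_nnnorm, hnorm, NNReal.coe_inv,
      inv_mul_le_iff₀ (by positivity), mul_one] at hscaled
    exact_mod_cast hscaled

end PositiveLinearMap

lemma spectrum_inverse_map_mul_map_mul_subset {𝕜 B A : Type*} [CommSemiring 𝕜] [Ring B] [Ring A]
    [Algebra 𝕜 B] [Algebra 𝕜 A] (T : B →ₗ[𝕜] A) (hT : ∀ x, IsUnit x → IsUnit (T x)) {u : B}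
    (hu : IsUnit u) (w : B) : spectrum 𝕜 ((T u)⁻¹ʳ * T (u * w)) ⊆ spectrum 𝕜 w := by
  intro μ hμ
  rw [spectrum.mem_iff] at hμ ⊢
  intro hw
  have hTu := hT u hu
  have heq : algebraMap 𝕜 A μ - (T u)⁻¹ʳ * T (u * w) =
      (T u)⁻¹ʳ * T (u * (algebraMap 𝕜 B μ - w)) := by
    rw [mul_sub, map_sub, mul_sub, Algebra.algebraMap_eq_smul_one, Algebra.algebraMap_eq_smul_one,
      mul_smul_comm, mul_one, map_smul, mul_smul_comm, Ring.inverse_mul_cancel _ hTu]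
  exact hμ (heq ▸ hTu.ringInverse.mul (hT _ (hu.mul hw)))

lemma HasDerivAt.ringInverse_mul {𝕜 R : Type*} [NontriviallyNormedField 𝕜] [NormedRing R]
    [NormedAlgebra 𝕜 R] [HasSummableGeomSeries R] {f g : 𝕜 → R} {f' g' : R} {x : 𝕜}
    (hf : HasDerivAt f f' x) (hfx : f x = 1) (hg : HasDerivAt g g' x) :
    HasDerivAt (fun t => (f t)⁻¹ʳ * g t) (g' - f' * g x) x := by
  have hinv := hasFDerivAt_ringInverse (𝕜 := 𝕜) (1 : Rˣ)
  rw [Units.val_one, ← hfx] at hinv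
  refine ((hinv.comp_hasDerivAt x hf).mul hg).congr_deriv ?_
  simp only [inv_one, Units.val_one, neg_apply, ContinuousLinearMap.mulLeftRight_apply, one_mul,
    mul_one, Function.comp_apply, hfx, Ring.inverse_one, neg_mul, neg_add_eq_sub]

section InvertibilityPreserving

variable {B A : Type*} [NormedRing B] [NormedAlgebra ℂ B] [CompleteSpace B] [CStarAlgebra A]
  [PartialOrder A] [StarOrderedRing A] (τ : A →ₚ[ℂ] ℂ) (T : B →ₗ[ℂ] A)

lemma norm_apply_inverse_map_mul_map_mul_le (hτ1 : τ 1 = 1)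
    (hτ : ∀ a b, τ (a * b) = τ (b * a)) (hT : ∀ x, IsUnit x → IsUnit (T x)) {u : B}
    (hu : IsUnit u) (w : B) :
    ‖τ ((T u)⁻¹ʳ * T (u * w))‖ ≤ ‖w‖ * ‖(1 : B)‖ := by
  have : (‖τ ((T u)⁻¹ʳ * T (u * w))‖₊ : ℝ≥0∞) ≤ ‖w‖₊ * ‖(1 : B)‖₊ :=
    calc _ ≤ spectralRadius ℂ ((T u)⁻¹ʳ * T (u * w)) :=
          τ.nnnorm_apply_le_spectralRadius hτ1 hτ _
      _ ≤ spectralRadius ℂ w := biSup_mono (spectrum_inverse_map_mul_map_mul_subset T hT hu w)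
      _ ≤ _ := iSup₂_le fun μ hμ => by
        rw [← ENNReal.coe_mul, ENNReal.coe_le_coe, ← NNReal.coe_le_coe]
        exact spectrum.norm_le_norm_mul_of_mem hμ
  exact_mod_cast this

lemma continuous_apply_inverse_map_mul_map (hτ1 : τ 1 = 1)
    (hτ : ∀ a b, τ (a * b) = τ (b * a)) (hT : ∀ x, IsUnit x → IsUnit (T x)) (v : Bˣ) :
    Continuous fun x => τ ((T v)⁻¹ʳ * T x) := by
  let L : B →ₗ[ℂ] ℂ := τ.toLinearMap ∘ₗ LinearMap.mulLeft ℂ (T v)⁻¹ʳ ∘ₗ T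
  refine AddMonoidHomClass.continuous_of_bound L (‖(↑v⁻¹ : B)‖ * ‖(1 : B)‖) fun x => ?_
  calc ‖L x‖ = ‖τ ((T v)⁻¹ʳ * T (v * (↑v⁻¹ * x)))‖ := by simp [L]
    _ ≤ ‖↑v⁻¹ * x‖ * ‖(1 : B)‖ :=
      norm_apply_inverse_map_mul_map_mul_le τ T hτ1 hτ hT v.isUnit _
    _ ≤ ‖(↑v⁻¹ : B)‖ * ‖(1 : B)‖ * ‖x‖ := by
      rw [mul_right_comm]; gcongr; exact norm_mul_le _ _

lemma apply_mul_eq_zero_of_apply_inverse_map_mul_eq_zero (hTsurj : Function.Surjective T)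
    (hT1 : T 1 = 1) {d : A} (hd : ∀ v : B, IsUnit v → τ ((T v)⁻¹ʳ * d) = 0) (z : A) :
    τ (z * d) = 0 := by
  obtain ⟨c, rfl⟩ := hTsurj z
  let τL : A →L[ℂ] ℂ := ⟨τ.toLinearMap, map_continuous τ⟩
  have hderiv :
      HasDerivAt (fun t : ℂ => τL ((1 + t • T c)⁻¹ʳ * d)) (τL (0 - T c * d)) 0 :=
    τL.hasFDerivAt.comp_hasDerivAt 0 <| HasDerivAt.ringInverse_mul
      (by simpa using ((hasDerivAt_id (0 : ℂ)).smul_const (T c)).const_add 1) (by simp)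
      (hasDerivAt_const 0 d)
  have hunit : ∀ᶠ t : ℂ in 𝓝 0, IsUnit (1 + t • c) :=
    (continuous_const.add (continuous_id.smul continuous_const)).continuousAt.eventually_mem
      (Units.isOpen.mem_nhds (by simp))
  have hzero : (fun t : ℂ => τL ((1 + t • T c)⁻¹ʳ * d)) =ᶠ[𝓝 0] fun _ => 0 := by
    filter_upwards [hunit] with t ht
    simpa [τL, hT1] using hd _ ht
  have := hderiv.unique ((hasDerivAt_const 0 0).congr_of_eventuallyEq hzero)
  simpa [τL] using this

lemma continuous_of_surjective_of_map_isUnit (hτ1 : τ 1 = 1)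
    (hτ : ∀ a b, τ (a * b) = τ (b * a)) (hτfaithful : ∀ a, τ (star a * a) = 0 → a = 0)
    (hTsurj : Function.Surjective T) (hT1 : T 1 = 1) (hT : ∀ x, IsUnit x → IsUnit (T x)) :
    Continuous T := by
  refine T.continuous_of_seq_closed_graph fun u x y hx hy => ?_
  have hd : ∀ v : B, IsUnit v → τ ((T v)⁻¹ʳ * (y - T x)) = 0 := by
    rintro _ ⟨v, rfl⟩
    have h1 : Tendsto (fun n => τ ((T v)⁻¹ʳ * T (u n))) atTop (𝓝 (τ ((T v)⁻¹ʳ * y))) :=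
      ((map_continuous τ).tendsto _).comp (hy.const_mul _)
    have h2 :
        Tendsto (fun n => τ ((T v)⁻¹ʳ * T (u n))) atTop (𝓝 (τ ((T v)⁻¹ʳ * T x))) :=
      ((continuous_apply_inverse_map_mul_map τ T hτ1 hτ hT v).tendsto x).comp hx
    rw [mul_sub, map_sub, tendsto_nhds_unique h1 h2, sub_self]
  exact sub_eq_zero.mp <| hτfaithful _ <|
    apply_mul_eq_zero_of_apply_inverse_map_mul_eq_zero τ T hTsurj hT1 hd _

end InvertibilityPreserving

section Exponential

variable {B A : Type*} [NormedRing B] [NormedAlgebra ℂ B] [CompleteSpace B] [NormedRing A]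
  [NormedAlgebra ℂ A] [CompleteSpace A] (T : B →L[ℂ] A) (a b : B)

lemma isUnit_exp_smul (w : ℂ) : IsUnit (exp (w • a)) :=
  isUnit_exp_of_mem_ball (𝕂 := ℂ) ((expSeries_radius_eq_top ℂ B).symm ▸ edist_lt_top _ _)

lemma differentiable_inverse_map_exp_smul_mul_map_exp_smul_mul
    (hT : ∀ x, IsUnit x → IsUnit (T x)) :
    Differentiable ℂ fun w : ℂ => (T (exp (w • a)))⁻¹ʳ * T (exp (w • a) * b) := fun w =>
  have he := (hasDerivAt_exp_smul_const' (𝕂 := ℂ) a w).differentiableAt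
  ((T.differentiableAt.comp w he).inverse (hT _ (isUnit_exp_smul a w))).mul
    (T.differentiableAt.comp w (he.mul_const b))

lemma hasDerivAt_inverse_map_exp_smul_mul_map_exp_smul_mul (hT1 : T 1 = 1) :
    HasDerivAt (fun w : ℂ => (T (exp (w • a)))⁻¹ʳ * T (exp (w • a) * b))
      (T (a * b) - T a * T b) 0 := by
  have he : HasDerivAt (fun w : ℂ => exp (w • a)) a 0 := by
    simpa using hasDerivAt_exp_smul_const' (𝕂 := ℂ) a 0
  refine (HasDerivAt.ringInverse_mul (T.hasFDerivAt.comp_hasDerivAt 0 he) (by simp [hT1])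
    (T.hasFDerivAt.comp_hasDerivAt 0 (he.mul_const b))).congr_deriv ?_
  simp

end Exponential

/-- For a surjective unital invertibility-preserving linear map `T` into a unital
C*-algebra with faithful tracial state `τ`, one has `τ (T(ab)) = τ (T a · T b)`. -/
theorem trace_map_mul_eq_trace_mul_map
    {B A : Type*} [NormedRing B] [NormedAlgebra ℂ B] [CompleteSpace B]
    [CStarAlgebra A]
    (τ : A →ₗ[ℂ] ℂ)
    (hτ1 : τ 1 = 1)
    (hτtrace : ∀ a b : A, τ (a * b) = τ (b * a))
    (hτpos : ∀ a : A, 0 ≤ τ (star a * a))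
    (hτfaithful : ∀ a : A, τ (star a * a) = 0 → a = 0)
    (T : B →ₗ[ℂ] A)
    (hTsurj : Function.Surjective T)
    (hT1 : T 1 = 1)
    (hTinv : ∀ x : B, IsUnit x → IsUnit (T x)) :
    ∀ a b : B, τ (T (a * b) - T a * T b) = 0 := by
  let _ : PartialOrder A := CStarAlgebra.spectralOrder A
  have _ : StarOrderedRing A := CStarAlgebra.spectralOrderedRing A
  let φ : A →ₚ[ℂ] ℂ := .mk₀ τ fun x hx => by
    obtain ⟨s, rfl⟩ := CStarAlgebra.nonneg_iff_eq_star_mul_self.mp hx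
    exact hτpos s
  let τL : A →L[ℂ] ℂ := ⟨τ, map_continuous φ⟩
  let TL : B →L[ℂ] A :=
    ⟨T, continuous_of_surjective_of_map_isUnit φ T hτ1 hτtrace hτfaithful hTsurj hT1 hTinv⟩
  intro a b
  set G := fun w : ℂ => (TL (exp (w • a)))⁻¹ʳ * TL (exp (w • a) * b)
  have hbounded : Bornology.IsBounded (Set.range (τL ∘ G)) :=
    isBounded_iff_forall_norm_le.mpr ⟨_, Set.forall_mem_range.mpr fun w =>
      norm_apply_inverse_map_mul_map_mul_le φ T hτ1 hτtrace hTinv (isUnit_exp_smul a w) b⟩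
  have hconst : ∀ w, τL (G w) = τL (G 0) := fun w =>
    (τL.differentiable.comp (differentiable_inverse_map_exp_smul_mul_map_exp_smul_mul TL a b
      hTinv)).apply_eq_apply_of_bounded hbounded w 0
  exact (τL.hasFDerivAt.comp_hasDerivAt 0 (hasDerivAt_inverse_map_exp_smul_mul_map_exp_smul_mul
    TL a b hT1)).unique ((hasDerivAt_const 0 (τL (G 0))).congr_of_eventuallyEq
      (Eventually.of_forall hconst))
end

section
/- Let T be a surjective linear mapping between two semisimple unital complex Banach algebras B and A that is spectrum-preserving, i.e., σ(T x) = σ(x) for all x ∈ B. Then T is injective. -/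
/-- A surjective spectrum-preserving linear map between semisimple unital complex
Banach algebras is injective. -/
theorem injective_of_spectrum_preserving
    {B A : Type*} [NormedRing B] [NormedAlgebra ℂ B] [CompleteSpace B]
    [NormedRing A] [NormedAlgebra ℂ A] [CompleteSpace A]
    (hBss : TwoSidedIdeal.jacobson (⊥ : TwoSidedIdeal B) = ⊥)
    (hAss : TwoSidedIdeal.jacobson (⊥ : TwoSidedIdeal A) = ⊥)
    (T : B →ₗ[ℂ] A)
    (hTsurj : Function.Surjective T)
    (hTspec : ∀ x : B, spectrum ℂ (T x) = spectrum ℂ x) :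
    Function.Injective T := by
  intro x y hxy
  set z := x - y with hzdef
  have hz : T z = 0 := by
    rw [hzdef, map_sub, hxy, sub_self]
  -- spectra of translates of `z` are unchanged
  have hspec : ∀ w : B, spectrum ℂ (z + w) = spectrum ℂ w := by
    intro w
    rw [← hTspec (z + w), map_add, hz, zero_add, hTspec]
  -- `1 + v * z` is a unit for every unit `v`
  have key : ∀ v : B, IsUnit v → IsUnit (1 + v * z) := by
    rintro v ⟨u, rfl⟩
    have h0 : IsUnit (z + (↑u⁻¹ : B)) := by
      rw [← spectrum.zero_notMem_iff (R := ℂ), hspec]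
      exact spectrum.zero_notMem ℂ (u⁻¹).isUnit
    have := u.isUnit.mul h0
    rwa [mul_add, u.mul_inv, add_comm] at this
  -- `1 + a * z` is a unit for every `a`
  have key' : ∀ a : B, IsUnit (1 + a * z) := by
    intro a
    set lam : ℂ := ((‖a‖ * ‖(1 : B)‖ + 1 : ℝ) : ℂ) with hlam
    have hlam_pos : (0 : ℝ) < ‖a‖ * ‖(1 : B)‖ + 1 := by positivity
    have hlam_ne : lam ≠ 0 := by
      simp only [hlam, ne_eq, Complex.ofReal_eq_zero]
      exact hlam_pos.ne'
    have hlam_notmem : lam ∉ spectrum ℂ a := by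
      intro hmem
      have := spectrum.norm_le_norm_mul_of_mem hmem
      rw [hlam, Complex.norm_real, Real.norm_of_nonneg hlam_pos.le] at this
      linarith
    have hv : IsUnit (a - algebraMap ℂ B lam) := by
      rw [spectrum.notMem_iff] at hlam_notmem
      have := hlam_notmem.neg
      rwa [neg_sub] at this
    obtain ⟨u, hu⟩ := key _ hv
    have hw : IsUnit ((↑u⁻¹ : B) * algebraMap ℂ B lam) :=
      u⁻¹.isUnit.mul ((algebraMap ℂ B).isUnit_map (IsUnit.mk0 lam hlam_ne))
    have hfinal := u.isUnit.mul (key _ hw)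
    have heq : (↑u : B) * (1 + (↑u⁻¹ : B) * algebraMap ℂ B lam * z) = 1 + a * z := by
      rw [mul_add, mul_one, ← mul_assoc, ← mul_assoc, u.mul_inv, one_mul, hu]
      rw [add_assoc, ← add_mul, sub_add_cancel]
    rwa [heq] at hfinal
  -- hence `z` lies in the Jacobson radical of `B`, which is trivial
  have hmem : z ∈ TwoSidedIdeal.jacobson (⊥ : TwoSidedIdeal B) := by
    rw [TwoSidedIdeal.mem_jacobson_iff]
    intro w
    obtain ⟨u, hu⟩ := key' w
    refine ⟨(↑u⁻¹ : B), ?_⟩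
    rw [TwoSidedIdeal.mem_bot, mul_assoc]
    have : (↑u⁻¹ : B) * (w * z) + ↑u⁻¹ - 1 = (↑u⁻¹ : B) * (1 + w * z) - 1 := by
      rw [mul_add, mul_one, add_comm ((↑u⁻¹:B) * (w*z))]
    rw [this, ← hu, u.inv_mul, sub_self]
  rw [hBss, TwoSidedIdeal.mem_bot] at hmem
  exact sub_eq_zero.mp hmem
end

section
/- Let T be a surjective linear mapping between two semisimple unital complex Banach algebras B and A that is spectrum-preserving, i.e., σ(T x) = σ(x) for all x ∈ B. Then T is unital: T(1) = 1. -/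
/-!
Put `q = T 1 - 1`. Since `T (x + c) = T x + c • q + c`, spectrum preservation and surjectivity
give `σ (y + c • q) = σ y` for every `y` and every scalar `c`; in particular `u + c • q` is
invertible whenever `u` is. For arbitrary `y` pick `μ ∉ σ y`; then `w = y - μ` is invertible and
`1 + y * q = w * (w⁻¹ * (1 + μ • q) + q)` is a product of invertible elements. Hence `q` lies
in the Jacobson radical of `A`, which is zero.
-/

theorem TwoSidedIdeal.mem_jacobson_bot_of_forall_isUnit_one_add_mul {R : Type*} [Ring R] {x : R}
    (h : ∀ y, IsUnit (1 + y * x)) : x ∈ jacobson (⊥ : TwoSidedIdeal R) := by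
  refine mem_jacobson_iff.mpr fun y ↦ ?_
  obtain ⟨z, hz⟩ := (h y).exists_left_inv
  refine ⟨z, ?_⟩
  rw [show z * y * x + z - 1 = z * (1 + y * x) - 1 by noncomm_ring, hz, sub_self]
  exact zero_mem _

section Algebra

variable {R A B : Type*} [CommRing R] [Ring A] [Ring B] [Algebra R A] [Algebra R B]

theorem spectrum_add_smul_map_one_sub_one {T : B →ₗ[R] A}
    (hT : ∀ x, spectrum R (T x) = spectrum R x) (x : B) (c : R) :
    spectrum R (T x + c • (T 1 - 1)) = spectrum R (T x) := by
  have hshift : T x + c • (T 1 - 1) + algebraMap R A c = T (x + algebraMap R B c) := by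
    simp only [map_add, Algebra.algebraMap_eq_smul_one, map_smul]
    module
  apply Set.image_injective.mpr (add_left_injective c)
  simp only [← Set.add_singleton]
  rw [spectrum.add_singleton_eq, hshift, hT, ← spectrum.add_singleton_eq, hT]

theorem isUnit_add_of_spectrum_add_eq {u q : A} (hu : IsUnit u)
    (h : spectrum R (u + q) = spectrum R u) : IsUnit (u + q) :=
  (spectrum.zero_notMem_iff R).mp (h ▸ (spectrum.zero_notMem_iff R).mpr hu)

end Algebra

theorem isUnit_one_add_mul_of_spectrum_add_smul_eq {𝕜 A : Type*} [NontriviallyNormedField 𝕜]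
    [NormedRing A] [NormedAlgebra 𝕜 A] [CompleteSpace A] {q : A}
    (hq : ∀ (y : A) (c : 𝕜), spectrum 𝕜 (y + c • q) = spectrum 𝕜 y) (y : A) :
    IsUnit (1 + y * q) := by
  obtain ⟨μ, hμ⟩ : ∃ μ : 𝕜, μ ∉ spectrum 𝕜 y := by
    by_contra! h
    exact NormedSpace.unbounded_univ 𝕜 𝕜 ((spectrum.isBounded y).subset fun μ _ ↦ h μ)
  have hw : IsUnit (y - algebraMap 𝕜 A μ) := by
    simpa using (spectrum.notMem_iff.mp hμ).neg
  have hμq : IsUnit (1 + μ • q) := isUnit_add_of_spectrum_add_eq isUnit_one (hq 1 μ)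
  have hfactor : 1 + y * q =
      (y - algebraMap 𝕜 A μ) * (↑hw.unit⁻¹ * (1 + μ • q) + q) := by
    rw [mul_add, ← mul_assoc, hw.mul_val_inv, one_mul, Algebra.smul_def]
    noncomm_ring
  rw [hfactor]
  refine hw.mul (isUnit_add_of_spectrum_add_eq (R := 𝕜) (hw.unit⁻¹.isUnit.mul hμq) ?_)
  simpa using hq (↑hw.unit⁻¹ * (1 + μ • q)) 1

theorem unital_of_spectrum_preserving_general
    {B A : Type*} [NormedRing B] [NormedAlgebra ℂ B]
    [NormedRing A] [NormedAlgebra ℂ A] [CompleteSpace A]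
    (hAss : TwoSidedIdeal.jacobson (⊥ : TwoSidedIdeal A) = ⊥)
    (T : B →ₗ[ℂ] A)
    (hTsurj : Function.Surjective T)
    (hTspec : ∀ x : B, spectrum ℂ (T x) = spectrum ℂ x) :
    T 1 = 1 := by
  have hq (y : A) (c : ℂ) : spectrum ℂ (y + c • (T 1 - 1)) = spectrum ℂ y := by
    obtain ⟨x, rfl⟩ := hTsurj y
    exact spectrum_add_smul_map_one_sub_one hTspec x c
  have hrad : T 1 - 1 ∈ TwoSidedIdeal.jacobson (⊥ : TwoSidedIdeal A) :=
    TwoSidedIdeal.mem_jacobson_bot_of_forall_isUnit_one_add_mul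
      (isUnit_one_add_mul_of_spectrum_add_smul_eq hq)
  rw [hAss] at hrad
  exact sub_eq_zero.mp hrad

/-- A surjective spectrum-preserving linear map between semisimple unital complex
Banach algebras is unital. -/
theorem unital_of_spectrum_preserving
    {B A : Type*} [NormedRing B] [NormedAlgebra ℂ B] [CompleteSpace B]
    [NormedRing A] [NormedAlgebra ℂ A] [CompleteSpace A]
    (hBss : TwoSidedIdeal.jacobson (⊥ : TwoSidedIdeal B) = ⊥)
    (hAss : TwoSidedIdeal.jacobson (⊥ : TwoSidedIdeal A) = ⊥)
    (T : B →ₗ[ℂ] A)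
    (hTsurj : Function.Surjective T)
    (hTspec : ∀ x : B, spectrum ℂ (T x) = spectrum ℂ x) :
    T 1 = 1 :=
  unital_of_spectrum_preserving_general hAss T hTsurj hTspec
end
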